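/- arXiv:2306.03391 — 5 statements merged into one kernel-verified Lean document; each statement's English description precedes it below -/
import Mathlib

section
/- The algebra of q-linearized polynomials over F_{q^{ms}} with coefficients in F_{q^m} (i.e., polynomials of the form Σ_{i=0}^{ms-1} a_i x^{q^i} with all a_i ∈ F_{q^m}, viewed as F_q-linear endomorphisms of F_{q^{ms}} under addition and composition) is isomorphic as an F_q-algebra to the algebra M_m(F_q[x]/⟨x^s−1⟩) of m×m matrices over the quotient ring F_q[x]/⟨x^s−1⟩. -/
/-!
Let `σ x = x ^ q ^ m` be the Frobenius of `F_{q^{ms}}` over `F_{q^m}`. It has order `s`, so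
`F_{q^{ms}}` is a module over `A = F_q[x]/⟨x^s - 1⟩` with `x` acting as `σ`. By the normal basis
theorem there is `v` with `v, σ v, …, σ^{s-1} v` an `F_{q^m}`-basis; multiplying `v` by an
`F_q`-basis `c₁, …, c_m` of `F_{q^m}` gives `m` vectors generating `F_{q^{ms}}` over `A`
(as `σ^j (c_k v) = c_k σ^j v`), hence an `A`-basis, since `A^m` and `F_{q^{ms}}` both have
`F_q`-dimension `ms`.
Thus `M_m(A) ≅ End_A F_{q^{ms}}`, the centralizer of `σ` in `End_{F_q} F_{q^{ms}}`. Linearized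
polynomials with coefficients in `F_{q^m}` commute with `σ`, and by Dedekind's independence of the
maps `x ↦ x ^ q ^ i` (`i < ms`) they form a space of dimension `ms · m = dim M_m(A)`: they are the
whole centralizer.
-/

open Polynomial Module

section Commutant

variable {K A V ι : Type*} [Field K] [CommRing A] [Algebra K A] [AddCommGroup V] [Module K V]
  [Fintype ι]

theorem linearIndependent_of_span_eq_top_of_finrank_eq [Module A V] [IsScalarTower K A V]
    [FiniteDimensional K V] [Module.Finite K A] {w : ι → V}
    (hspan : Submodule.span A (Set.range w) = ⊤)
    (hdim : finrank K V = Fintype.card ι * finrank K A) : LinearIndependent A w := by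
  rw [linearIndependent_iff_injective_fintypeLinearCombination]
  have hsurj : Function.Surjective (Fintype.linearCombination A w) := by
    rw [← LinearMap.range_eq_top, Fintype.range_linearCombination, hspan]
  let f := (Fintype.linearCombination A w).restrictScalars K
  refine (f.injective_iff_surjective_of_finrank_eq_finrank ?_).mpr hsurj
  rw [hdim, finrank_pi_fintype, Finset.sum_const, smul_eq_mul, Finset.card_univ]

variable (K A V) in
def Module.End.restrictScalarsAlgHom [Module A V] [IsScalarTower K A V] :
    Module.End A V →ₐ[K] Module.End K V :=
  AlgHom.ofLinearMap (LinearMap.restrictScalarsₗ K A V V K) rfl fun _ _ => rfl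

theorem Module.End.restrictScalarsAlgHom_injective [Module A V] [IsScalarTower K A V] :
    Function.Injective (Module.End.restrictScalarsAlgHom K A V) :=
  LinearMap.restrictScalars_injective K

theorem Module.End.range_restrictScalarsAlgHom [Module A V] [IsScalarTower K A V] :
    Set.range (Module.End.restrictScalarsAlgHom K A V) =
      {f | ∀ (a : A) (x : V), f (a • x) = a • f x} := by
  ext f
  refine ⟨?_, fun hf => ⟨{ f with map_smul' := hf }, rfl⟩⟩
  rintro ⟨g, rfl⟩
  exact g.map_smul

variable [DecidableEq ι]

theorem exists_injective_matrix_algHom_range_eq [Module A V] [IsScalarTower K A V]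
    (b : Basis ι A V) :
    ∃ φ : Matrix ι ι A →ₐ[K] Module.End K V, Function.Injective φ ∧
      Set.range φ = {f | ∀ (a : A) (x : V), f (a • x) = a • f x} := by
  let e := ((LinearMap.toMatrixAlgEquiv b).symm.restrictScalars K : Matrix ι ι A ≃ₐ[K] _)
  refine ⟨(Module.End.restrictScalarsAlgHom K A V).comp e.toAlgHom,
    Module.End.restrictScalarsAlgHom_injective.comp e.injective, ?_⟩
  rw [AlgHom.coe_comp, Set.range_comp, AlgEquiv.coe_toAlgHom, e.surjective.range_eq,
    Set.image_univ, Module.End.range_restrictScalarsAlgHom]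

theorem exists_injective_matrix_algHom_range_eq_centralizer [FiniteDimensional K V]
    [Module.Finite K A] (ψ : A →ₐ[K] Module.End K V) (w : ι → V)
    (hspan : ⊤ ≤ Submodule.span K (Set.range fun p : A × ι => ψ p.1 (w p.2)))
    (hdim : finrank K V = Fintype.card ι * finrank K A) :
    ∃ φ : Matrix ι ι A →ₐ[K] Module.End K V, Function.Injective φ ∧
      Set.range φ = (Set.range ψ).centralizer := by
  let : Module A V := Module.compHom V ψ.toRingHom
  have : IsScalarTower K A V := ⟨fun c a x => by
    change ψ (c • a) x = c • ψ a x
    rw [map_smul]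
    rfl⟩
  have hw : Submodule.span A (Set.range w) = ⊤ := by
    have : Submodule.span K (Set.range fun p : A × ι => ψ p.1 (w p.2)) ≤
        (Submodule.span A (Set.range w)).restrictScalars K := by
      rw [Submodule.span_le]
      rintro _ ⟨⟨a, i⟩, rfl⟩
      exact Submodule.smul_mem _ a (Submodule.subset_span ⟨i, rfl⟩)
    exact eq_top_iff.2 fun x _ => hspan.trans this trivial
  obtain ⟨φ, hinj, hrange⟩ := exists_injective_matrix_algHom_range_eq (K := K)
    (Basis.mk (linearIndependent_of_span_eq_top_of_finrank_eq hw hdim) hw.ge)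
  refine ⟨φ, hinj, hrange.trans ?_⟩
  ext f
  simp only [Set.mem_ofPred_eq, Set.mem_centralizer_iff, Set.forall_mem_range, LinearMap.ext_iff,
    Module.End.mul_apply]
  exact forall_congr' fun a => forall_congr' fun x => eq_comm

end Commutant

theorem finrank_quotient_span_X_pow_sub_one {K : Type*} [Field K] (n : ℕ) :
    finrank K (K[X] ⧸ Ideal.span {(X ^ n - 1 : K[X])}) = n := by
  rw [finrank_quotient_span_eq_natDegree, ← C_1, natDegree_X_pow_sub_C]

theorem finrank_eq_of_card_eq_pow {K V : Type*} [Field K] [Fintype K] [AddCommGroup V]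
    [Module K V] [Fintype V] {n : ℕ} (h : Fintype.card V = Fintype.card K ^ n) :
    finrank K V = n :=
  Nat.pow_right_injective Fintype.one_lt_card (card_eq_pow_finrank.symm.trans h)

open FiniteField

section FrobeniusPowers

variable (K L : Type*) [Field K] [Fintype K] [Field L] [Algebra K L]

theorem frobeniusAlgHom_pow_apply (n : ℕ) (x : L) :
    (frobeniusAlgHom K L ^ n) x = x ^ Fintype.card K ^ n := by
  rw [AlgHom.coe_pow, coe_frobeniusAlgHom, pow_iterate]

variable [Finite L]

theorem linearIndependent_frobeniusAlgHom_pow :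
    LinearIndependent L fun i : Fin (finrank K L) => (frobeniusAlgHom K L ^ (i : ℕ)).toLinearMap :=
  (linearIndependent_algHom_toLinearMap K L L).comp _ (bijective_frobeniusAlgHom_pow K L).1

-- The normal basis theorem, with `Gal(L/K)` enumerated by the powers of the Frobenius.
theorem exists_linearIndependent_frobeniusAlgHom_pow_apply :
    ∃ v : L, LinearIndependent K fun i : Fin (finrank K L) =>
      (frobeniusAlgHom K L ^ (i : ℕ)) v := by
  obtain ⟨v, hv⟩ := exists_linearIndependent_algEquiv_apply K L
  refine ⟨v, ?_⟩
  convert hv.comp _ (bijective_frobeniusAlgEquivOfAlgebraic_pow K L).1 using 1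
  funext i
  simp [frobeniusAlgHom_pow_apply, AlgEquiv.coe_pow, coe_frobeniusAlgEquivOfAlgebraic_iterate]

end FrobeniusPowers

section Linearized

variable (K F L : Type*) [Field K] [Fintype K] [Field F] [Field L]
  [Algebra K F] [Algebra F L] [Algebra K L] [IsScalarTower K F L]

def linearizedMap (n : ℕ) : (Fin n → F) →ₗ[K] Module.End K L :=
  (Fintype.linearCombination L fun i : Fin n =>
      (frobeniusAlgHom K L ^ (i : ℕ)).toLinearMap).restrictScalars K ∘ₗ
    LinearMap.compLeft (IsScalarTower.toAlgHom K F L).toLinearMap (Fin n)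

variable {K F L} in
theorem linearizedMap_apply {n : ℕ} (a : Fin n → F) (x : L) :
    linearizedMap K F L n a x = ∑ i, algebraMap F L (a i) * x ^ Fintype.card K ^ (i : ℕ) := by
  simp [linearizedMap, Fintype.linearCombination_apply, coe_frobeniusAlgHom, pow_iterate,
    Algebra.smul_def]

theorem coe_range_linearizedMap (n : ℕ) :
    (LinearMap.range (linearizedMap K F L n) : Set (Module.End K L)) =
      {f | ∃ a : Fin n → L, (∀ i, a i ∈ Set.range (algebraMap F L)) ∧
        ∀ x, f x = ∑ i, a i * x ^ Fintype.card K ^ (i : ℕ)} := by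
  ext f
  constructor
  · rintro ⟨a, rfl⟩
    exact ⟨fun i => algebraMap F L (a i), fun i => ⟨a i, rfl⟩, linearizedMap_apply a⟩
  · rintro ⟨a, ha, hf⟩
    choose b hb using ha
    refine ⟨b, LinearMap.ext fun x => ?_⟩
    simp only [linearizedMap_apply, hb, hf]

theorem commute_linearizedMap {n : ℕ} (g : L →ₐ[F] L) (a : Fin n → F) :
    Commute (g.restrictScalars K).toLinearMap (linearizedMap K F L n a) :=
  LinearMap.ext fun x => by simp [linearizedMap_apply]

variable [Finite L]

theorem injective_linearizedMap {n : ℕ} (hn : finrank K L = n) :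
    Function.Injective (linearizedMap K F L n) := by
  subst hn
  have hcomb := linearIndependent_iff_injective_fintypeLinearCombination.1
    (linearIndependent_frobeniusAlgHom_pow K L)
  intro a b hab
  funext i
  exact (algebraMap F L).injective (congrFun (hcomb hab) i)

theorem finrank_range_linearizedMap [Fintype F] {n : ℕ} (hn : finrank K L = n) :
    finrank K (LinearMap.range (linearizedMap K F L n)) = n * finrank K F := by
  rw [LinearMap.finrank_range_of_inj (injective_linearizedMap K F L hn), finrank_pi_fintype,
    Finset.sum_const, Finset.card_univ, Fintype.card_fin, smul_eq_mul]

end Linearized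

section Frobenius

variable (K F L : Type*) [Field K] [Field F] [Fintype F] [Field L]
  [Algebra K F] [Algebra F L] [Algebra K L] [IsScalarTower K F L]

def frobeniusEnd : Module.End K L := ((frobeniusAlgHom F L).restrictScalars K).toLinearMap

theorem frobeniusEnd_pow_apply (n : ℕ) (x : L) :
    (frobeniusEnd K F L ^ n) x = (frobeniusAlgHom F L ^ n) x := by
  rw [Module.End.pow_apply, AlgHom.coe_pow]
  rfl

variable [Finite L]

theorem frobeniusEnd_pow_finrank : frobeniusEnd K F L ^ finrank F L = 1 := by
  ext x
  rw [frobeniusEnd_pow_apply, ← orderOf_frobeniusAlgHom, pow_orderOf_eq_one]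
  rfl

noncomputable def frobeniusRep :
    K[X] ⧸ Ideal.span {(X ^ finrank F L - 1 : K[X])} →ₐ[K] Module.End K L :=
  Ideal.Quotient.liftₐ _ (aeval (frobeniusEnd K F L)) fun p hp => by
    obtain ⟨c, rfl⟩ := Ideal.mem_span_singleton'.1 hp
    rw [map_mul, map_sub, map_pow, aeval_X, frobeniusEnd_pow_finrank, map_one, sub_self,
      mul_zero]

theorem frobeniusRep_mk (p : K[X]) :
    frobeniusRep K F L (Ideal.Quotient.mk _ p) = aeval (frobeniusEnd K F L) p :=
  Ideal.Quotient.liftₐ_apply ..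

theorem centralizer_range_frobeniusRep :
    (Set.range (frobeniusRep K F L)).centralizer = Set.centralizer {frobeniusEnd K F L} := by
  refine (Set.centralizer_subset ?_).antisymm ?_
  · rintro _ rfl
    exact ⟨Ideal.Quotient.mk _ X, by rw [frobeniusRep_mk, aeval_X]⟩
  · rintro f hf _ ⟨a, rfl⟩
    obtain ⟨p, rfl⟩ := Ideal.Quotient.mk_surjective a
    have hσ : frobeniusEnd K F L ∈ Subalgebra.centralizer K {f} := by
      rw [Subalgebra.mem_centralizer_iff]
      rintro _ rfl
      exact (hf _ rfl).symm
    have := Algebra.adjoin_le (Set.singleton_subset_iff.2 hσ)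
      (aeval_mem_adjoin_singleton K (x := frobeniusEnd K F L) (p := p))
    rw [Subalgebra.mem_centralizer_iff] at this
    rw [frobeniusRep_mk]
    exact (this f rfl).symm

theorem top_le_span_frobeniusRep_apply_smul {ι : Type*} (c : Basis ι K F) {v : L}
    (hv : LinearIndependent F fun j : Fin (finrank F L) => (frobeniusAlgHom F L ^ (j : ℕ)) v) :
    ⊤ ≤ Submodule.span K
      (Set.range fun p : (K[X] ⧸ Ideal.span {(X ^ finrank F L - 1 : K[X])}) × ι =>
        frobeniusRep K F L p.1 (c p.2 • v)) := by
  have : Nonempty (Fin (finrank F L)) := ⟨⟨0, finrank_pos⟩⟩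
  let nb := basisOfLinearIndependentOfCardEqFinrank hv (Fintype.card_fin _)
  rw [← (c.smulTower nb).span_eq]
  refine Submodule.span_mono ?_
  rintro _ ⟨⟨i, j⟩, rfl⟩
  refine ⟨(Ideal.Quotient.mk _ (X ^ (j : ℕ)), i), ?_⟩
  simp [nb, frobeniusRep_mk, frobeniusEnd_pow_apply]

theorem exists_injective_matrix_algHom_range_eq_centralizer_frobeniusEnd :
    ∃ φ : Matrix (Fin (finrank K F)) (Fin (finrank K F))
        (K[X] ⧸ Ideal.span {(X ^ finrank F L - 1 : K[X])}) →ₐ[K] Module.End K L,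
      Function.Injective φ ∧ Set.range φ = Set.centralizer {frobeniusEnd K F L} := by
  obtain ⟨v, hv⟩ := exists_linearIndependent_frobeniusAlgHom_pow_apply F L
  have hA := finrank_quotient_span_X_pow_sub_one (K := K) (finrank F L)
  have : Module.Finite K (K[X] ⧸ Ideal.span {(X ^ finrank F L - 1 : K[X])}) :=
    Module.finite_of_finrank_pos (by rw [hA]; exact finrank_pos)
  have hdim : finrank K L = Fintype.card (Fin (finrank K F)) *
      finrank K (K[X] ⧸ Ideal.span {(X ^ finrank F L - 1 : K[X])}) := by
    rw [hA, Fintype.card_fin, finrank_mul_finrank]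
  rw [← centralizer_range_frobeniusRep]
  exact exists_injective_matrix_algHom_range_eq_centralizer _ (fun i => finBasis K F i • v)
    (top_le_span_frobeniusRep_apply_smul K F L _ hv) hdim

theorem range_linearizedMap_eq_centralizer [Fintype K] {n : ℕ} (hn : finrank K L = n) :
    (LinearMap.range (linearizedMap K F L n) : Set (Module.End K L)) =
      Set.centralizer {frobeniusEnd K F L} := by
  obtain ⟨φ, hφ, hrange⟩ := exists_injective_matrix_algHom_range_eq_centralizer_frobeniusEnd K F L
  let C := Subalgebra.toSubmodule (Subalgebra.centralizer K {frobeniusEnd K F L})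
  have hC : LinearMap.range φ.toLinearMap = C :=
    SetLike.coe_injective (by
      rw [LinearMap.coe_range, AlgHom.coe_toLinearMap, hrange]
      exact (Subalgebra.coe_centralizer K _).symm)
  have hle : LinearMap.range (linearizedMap K F L n) ≤ C := by
    rintro _ ⟨a, rfl⟩
    rw [Subalgebra.mem_toSubmodule, Subalgebra.mem_centralizer_iff]
    rintro _ rfl
    exact commute_linearizedMap K F L _ a
  have hfinrank : finrank K (LinearMap.range (linearizedMap K F L n)) = finrank K C := by
    rw [finrank_range_linearizedMap K F L hn, ← hC, LinearMap.finrank_range_of_inj hφ,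
      finrank_matrix, finrank_quotient_span_X_pow_sub_one, ← hn, ← finrank_mul_finrank K F L]
    simp only [Fintype.card_fin]
    ring
  rw [Submodule.eq_of_le_of_finrank_eq hle hfinrank]
  exact Subalgebra.coe_centralizer K _

end Frobenius

theorem stmt0_general (q m s : ℕ)
    (Fq Fqm Fqn : Type*) [Field Fq] [Field Fqm] [Field Fqn]
    [Fintype Fq] [Fintype Fqm] [Fintype Fqn]
    [Algebra Fq Fqm] [Algebra Fqm Fqn] [Algebra Fq Fqn] [IsScalarTower Fq Fqm Fqn]
    (hq : Fintype.card Fq = q) (hqm : Fintype.card Fqm = q ^ m)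
    (hqn : Fintype.card Fqn = q ^ (m * s)) :
    ∃ φ : Matrix (Fin m) (Fin m)
        (Polynomial Fq ⧸ (Ideal.span {Polynomial.X ^ s - 1} : Ideal (Polynomial Fq)))
        →ₐ[Fq] Module.End Fq Fqn,
      Function.Injective φ ∧
      Set.range φ = { f : Module.End Fq Fqn | ∃ a : Fin (m * s) → Fqn,
        (∀ i, a i ∈ Set.range (algebraMap Fqm Fqn)) ∧
        ∀ x : Fqn, f x = ∑ i : Fin (m * s), a i * x ^ q ^ (i : ℕ) } := by
  subst hq
  obtain rfl : finrank Fq Fqm = m := finrank_eq_of_card_eq_pow hqm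
  obtain rfl : finrank Fqm Fqn = s := finrank_eq_of_card_eq_pow (by rw [hqn, hqm, pow_mul])
  obtain ⟨φ, hφ, hrange⟩ :=
    exists_injective_matrix_algHom_range_eq_centralizer_frobeniusEnd Fq Fqm Fqn
  refine ⟨φ, hφ, ?_⟩
  rw [hrange, ← range_linearizedMap_eq_centralizer Fq Fqm Fqn (finrank_mul_finrank Fq Fqm Fqn).symm,
    coe_range_linearizedMap]

/-- The algebra `R_m` of q-linearized polynomial maps on `F_{q^{ms}}` with coefficients in
`F_{q^m}` is isomorphic as an `F_q`-algebra to `M_m(F_q[x]/⟨x^s - 1⟩)`: there is an injective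
`F_q`-algebra homomorphism from the matrix algebra into `Module.End F_q F_{q^{ms}}` whose range
is exactly the set of such linearized maps. -/
theorem stmt0 (q m s : ℕ) (hm : 0 < m) (hs : 0 < s)
    (Fq Fqm Fqn : Type*) [Field Fq] [Field Fqm] [Field Fqn]
    [Fintype Fq] [Fintype Fqm] [Fintype Fqn]
    [Algebra Fq Fqm] [Algebra Fqm Fqn] [Algebra Fq Fqn] [IsScalarTower Fq Fqm Fqn]
    (hq : Fintype.card Fq = q) (hqm : Fintype.card Fqm = q ^ m)
    (hqn : Fintype.card Fqn = q ^ (m * s)) :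
    ∃ φ : Matrix (Fin m) (Fin m)
        (Polynomial Fq ⧸ (Ideal.span {Polynomial.X ^ s - 1} : Ideal (Polynomial Fq)))
        →ₐ[Fq] Module.End Fq Fqn,
      Function.Injective φ ∧
      Set.range φ = { f : Module.End Fq Fqn | ∃ a : Fin (m * s) → Fqn,
        (∀ i, a i ∈ Set.range (algebraMap Fqm Fqn)) ∧
        ∀ x : Fqn, f x = ∑ i : Fin (m * s), a i * x ^ q ^ (i : ℕ) } :=
  stmt0_general q m s Fq Fqm Fqn hq hqm hqn
end

section
/- Let α ∈ F_{q^m} be normal over F_q with dual normal basis element u. The matrix A = (α^{q^{i+j}})_{0≤i,j≤m−1} (exponents mod m) is invertible, with inverse A^{−1} = (u^{q^{i+j}})_{0≤i,j≤m−1}. -/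
/-!
The `(i, k)` entry of the product is `∑ⱼ (α^{q^i} u^{q^k})^{q^j}`, the sum of the Galois conjugates
of `α^{q^i} u^{q^k}`, i.e. its trace, which is `δᵢₖ` by duality.
-/

open Module

theorem pow_pow_add_mul_pow_pow_add {M : Type*} [CommMonoid M] (q i j k : ℕ) (x y : M) :
    x ^ q ^ (i + j) * y ^ q ^ (j + k) = (x ^ q ^ i * y ^ q ^ k) ^ q ^ j := by
  rw [mul_pow, ← pow_mul, ← pow_mul, ← pow_add, ← pow_add, add_comm j k]

namespace FiniteField

variable {K L : Type*} [Field K] [Field L] [Finite L] [Algebra K L]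

theorem algebraMap_trace_eq_sum_fin_pow {m : ℕ} (hm : finrank K L = m) (x : L) :
    algebraMap K L (Algebra.trace K L x) = ∑ j : Fin m, x ^ Nat.card K ^ (j : ℕ) := by
  rw [algebraMap_trace_eq_sum_pow, hm, ← Fin.sum_univ_eq_sum_range]

theorem of_pow_pow_add_mul_eq_one_of_trace_dual {m q : ℕ} (hm : finrank K L = m)
    (hq : Nat.card K = q) {α u : L}
    (hdual : ∀ i j : Fin m,
      Algebra.trace K L (α ^ q ^ (i : ℕ) * u ^ q ^ (j : ℕ)) = if i = j then 1 else 0) :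
    (Matrix.of fun i j : Fin m => α ^ q ^ ((i : ℕ) + (j : ℕ))) *
        (Matrix.of fun i j : Fin m => u ^ q ^ ((i : ℕ) + (j : ℕ))) = 1 := by
  ext i k
  subst hq
  rw [Matrix.mul_apply, Matrix.one_apply]
  simp only [Matrix.of_apply, pow_pow_add_mul_pow_pow_add]
  rw [← algebraMap_trace_eq_sum_fin_pow hm, hdual, apply_ite (algebraMap K L), map_one, map_zero]

end FiniteField

theorem stmt2_general (q m : ℕ)
    (Fq Fqm : Type*) [Field Fq] [Field Fqm] [Fintype Fq] [Fintype Fqm] [Algebra Fq Fqm]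
    (hq : Fintype.card Fq = q)
    (α u : Fqm)
    (b : Module.Basis (Fin m) Fq Fqm)
    (hdual : ∀ i j : Fin m,
      Algebra.trace Fq Fqm (α ^ q ^ (i : ℕ) * u ^ q ^ (j : ℕ)) = if i = j then 1 else 0) :
    (Matrix.of fun i j : Fin m => α ^ q ^ ((i : ℕ) + (j : ℕ))) *
        (Matrix.of fun i j : Fin m => u ^ q ^ ((i : ℕ) + (j : ℕ))) = 1 ∧
    (Matrix.of fun i j : Fin m => u ^ q ^ ((i : ℕ) + (j : ℕ))) *
        (Matrix.of fun i j : Fin m => α ^ q ^ ((i : ℕ) + (j : ℕ))) = 1 := by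
  have hm : Module.finrank Fq Fqm = m := by rw [Module.finrank_eq_card_basis b, Fintype.card_fin]
  have hAu := FiniteField.of_pow_pow_add_mul_eq_one_of_trace_dual hm
    (Nat.card_eq_fintype_card.trans hq) hdual
  exact ⟨hAu, mul_eq_one_comm.mp hAu⟩

/-- For a normal element `α` with dual normal basis element `u`, the matrix
`(α^{q^{i+j}})` is invertible with inverse `(u^{q^{i+j}})`. -/
theorem stmt2 (q m : ℕ) (hm : 0 < m)
    (Fq Fqm : Type*) [Field Fq] [Field Fqm] [Fintype Fq] [Fintype Fqm] [Algebra Fq Fqm]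
    (hq : Fintype.card Fq = q) (hqm : Fintype.card Fqm = q ^ m)
    (α u : Fqm)
    (b : Module.Basis (Fin m) Fq Fqm) (hb : ∀ i : Fin m, b i = α ^ q ^ (i : ℕ))
    (hdual : ∀ i j : Fin m,
      Algebra.trace Fq Fqm (α ^ q ^ (i : ℕ) * u ^ q ^ (j : ℕ)) = if i = j then 1 else 0) :
    (Matrix.of fun i j : Fin m => α ^ q ^ ((i : ℕ) + (j : ℕ))) *
        (Matrix.of fun i j : Fin m => u ^ q ^ ((i : ℕ) + (j : ℕ))) = 1 ∧
    (Matrix.of fun i j : Fin m => u ^ q ^ ((i : ℕ) + (j : ℕ))) *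
        (Matrix.of fun i j : Fin m => α ^ q ^ ((i : ℕ) + (j : ℕ))) = 1 :=
  stmt2_general q m Fq Fqm hq α u b hdual
end

section
/- If R is a finite commutative ring with unity and m ≥ 2, then the general linear group GL_m(R) is generated by elementary matrices: the transvections I + c·E_{jk} (j ≠ k, c ∈ R) together with the dilations D_l(v) (identity matrix with diagonal entry l replaced by a unit v ∈ R^×). -/
/-!
An invertible matrix is reduced to the identity column by column, using row operations only.
If the columns indexed by `s` are already those of the identity and `k ∉ s`, then the relation
`A⁻¹ * A = 1` shows that the pivot `A k k` and the entries `A i k` with `i ∉ insert k s`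
generate the unit ideal. A ring with finitely many maximal ideals has stable rank one (solve
modulo each maximal ideal, then glue by the Chinese remainder theorem), so adding a combination
of the rows `i ∉ insert k s` to row `k` makes the pivot a unit without disturbing the columns
in `s`. A dilation turns the pivot into `1` and transvections clear the rest of column `k`.
-/

open Finset Matrix

theorem exists_isUnit_add_sum_mul {R : Type*} [CommRing R] [Finite (MaximalSpectrum R)]
    {ι : Type*} (s : Finset ι) (a : R) (b : ι → R)
    (h : Ideal.span (insert a (b '' s)) = ⊤) :
    ∃ t : ι → R, IsUnit (a + ∑ i ∈ s, t i * b i) := by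
  classical
  have hloc (P : MaximalSpectrum R) :
      ∃ t : ι → R, a + ∑ i ∈ s, t i * b i ∉ P.asIdeal := by
    by_cases ha : a ∈ P.asIdeal
    · obtain ⟨i, hi, hbi⟩ : ∃ i ∈ s, b i ∉ P.asIdeal := by
        by_contra! hb
        refine P.isMaximal.ne_top (top_le_iff.mp (h ▸ Ideal.span_le.mpr ?_))
        exact Set.insert_subset ha (Set.image_subset_iff.mpr fun i hi => hb i hi)
      refine ⟨Pi.single i 1, fun hP => hbi ?_⟩
      simpa [Pi.single_apply, hi] using P.asIdeal.sub_mem hP ha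
    · exact ⟨0, by simpa using ha⟩
  choose tP htP using hloc
  -- glue the local solutions by the Chinese remainder theorem
  choose t ht using fun i => Ideal.exists_forall_sub_mem_ideal
    (fun _ _ hPQ => MaximalSpectrum.isCoprime_of_ne hPQ) fun P : MaximalSpectrum R => tP P i
  refine ⟨t, by_contra fun hu => ?_⟩
  obtain ⟨M, hM, hxM⟩ := exists_max_ideal_of_mem_nonunits hu
  refine htP ⟨M, hM⟩ ?_
  have hdiff : ∑ i ∈ s, t i * b i - ∑ i ∈ s, tP ⟨M, hM⟩ i * b i ∈ M := by
    rw [← sum_sub_distrib]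
    exact M.sum_mem fun i _ => by rw [← sub_mul]; exact M.mul_mem_right _ (ht i ⟨M, hM⟩)
  convert M.sub_mem hxM hdiff using 1
  ring

theorem Submonoid.one_add_sum_mem_of_pairwise_mul_eq_zero {A ι : Type*} [Ring A]
    (S : Submonoid A) {s : Finset ι} {X : ι → A} (hX : ∀ i ∈ s, 1 + X i ∈ S)
    (hmul : (s : Set ι).Pairwise fun i j => X i * X j = 0) : 1 + ∑ i ∈ s, X i ∈ S := by
  classical
  induction s using Finset.induction_on with
  | empty => simp
  | insert a s ha ih =>
    rw [coe_insert, Set.pairwise_insert] at hmul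
    have hcross : (∑ i ∈ s, X i) * X a = 0 :=
      sum_mul s X (X a) ▸ sum_eq_zero fun i hi =>
        (hmul.2 i hi (ne_of_mem_of_not_mem hi ha).symm).2
    have hprod : 1 + ∑ i ∈ insert a s, X i = (1 + ∑ i ∈ s, X i) * (1 + X a) := by
      rw [sum_insert ha, add_mul, mul_add, mul_add, hcross]; noncomm_ring
    rw [hprod]
    exact S.mul_mem (ih (fun i hi => hX i (mem_insert_of_mem hi)) hmul.1)
      (hX a (mem_insert_self a s))

namespace Matrix

variable {n : Type*} [Fintype n] [DecidableEq n] {R : Type*} [CommRing R]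

variable (n R) in
def elementaryGenerators : Set (Matrix n n R)ˣ :=
  { A | (∃ (j k : n) (c : R), j ≠ k ∧ (A : Matrix n n R) = 1 + single j k c) ∨
      ∃ (l : n) (v : Rˣ),
        (A : Matrix n n R) = diagonal (Function.update (fun _ => (1 : R)) l (v : R)) }

variable (n R) in
def elementarySubgroup : Subgroup (Matrix n n R)ˣ := Subgroup.closure (elementaryGenerators n R)

variable (n R) in
/-- Working in the matrix ring, row operations can be composed without exhibiting their
inverses. -/
def elementaryMatrices : Submonoid (Matrix n n R) :=
  (elementarySubgroup n R).toSubmonoid.map (Units.coeHom _)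

def EqOneOnCols (s : Finset n) (A : Matrix n n R) : Prop :=
  ∀ i, ∀ j ∈ s, A i j = (1 : Matrix n n R) i j

theorem one_add_single_mem_elementaryMatrices {i j : n} (hij : i ≠ j) (c : R) :
    1 + single i j c ∈ elementaryMatrices n R := by
  have hu : IsUnit (1 + single i j c) := by
    rw [isUnit_iff_isUnit_det, ← transvection, det_transvection_of_ne _ _ hij]
    exact isUnit_one
  exact Submonoid.mem_map.2
    ⟨hu.unit, Subgroup.subset_closure (Or.inl ⟨i, j, c, hij, hu.unit_spec⟩), hu.unit_spec⟩

theorem diagonal_update_mem_elementaryMatrices (l : n) (v : Rˣ) :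
    diagonal (Function.update (fun _ => (1 : R)) l (v : R)) ∈ elementaryMatrices n R := by
  have hu : IsUnit (diagonal (Function.update (fun _ => (1 : R)) l (v : R))) := by
    refine isUnit_diagonal.2 (Pi.isUnit_iff.2 fun i => ?_)
    rcases eq_or_ne i l with rfl | hi
    · simp
    · simp [hi]
  exact Submonoid.mem_map.2
    ⟨hu.unit, Subgroup.subset_closure (Or.inr ⟨l, v, hu.unit_spec⟩), hu.unit_spec⟩

theorem one_add_sum_single_row_mem_elementaryMatrices {k : n} {s : Finset n} (hk : k ∉ s)
    (t : n → R) : 1 + ∑ i ∈ s, single k i (t i) ∈ elementaryMatrices n R :=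
  Submonoid.one_add_sum_mem_of_pairwise_mul_eq_zero _
    (fun _ hi => one_add_single_mem_elementaryMatrices (ne_of_mem_of_not_mem hi hk).symm _)
    fun _ hi _ _ _ => single_mul_single_of_ne (h := ne_of_mem_of_not_mem hi hk) ..

theorem one_add_sum_single_col_mem_elementaryMatrices {k : n} {s : Finset n} (hk : k ∉ s)
    (t : n → R) : 1 + ∑ i ∈ s, single i k (t i) ∈ elementaryMatrices n R :=
  Submonoid.one_add_sum_mem_of_pairwise_mul_eq_zero _
    (fun _ hi => one_add_single_mem_elementaryMatrices (ne_of_mem_of_not_mem hi hk) _)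
    fun _ _ _ hj _ => single_mul_single_of_ne (h := (ne_of_mem_of_not_mem hj hk).symm) ..

theorem one_add_sum_single_mul_apply (f g : n → n) (s : Finset n) (t : n → R)
    (A : Matrix n n R) (p q : n) :
    ((1 + ∑ i ∈ s, single (f i) (g i) (t i)) * A) p q
      = A p q + ∑ i ∈ s, if p = f i then t i * A (g i) q else 0 := by
  have hsingle (i : n) : (single (f i) (g i) (t i) * A) p q
      = if p = f i then t i * A (g i) q else 0 := by
    split_ifs with h
    · exact h ▸ single_mul_apply_same ..
    · exact single_mul_apply_of_ne (h := h) ..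
  simp only [add_mul, one_mul, Matrix.add_apply, sum_mul, Matrix.sum_apply, hsingle]

theorem exists_mem_elementaryMatrices_isUnit_pivot [Finite (MaximalSpectrum R)]
    {A B : Matrix n n R} (hBA : B * A = 1) {s : Finset n} {k : n} (hk : k ∉ s)
    (hA : EqOneOnCols s A) :
    ∃ U ∈ elementaryMatrices n R,
      EqOneOnCols s (U * A) ∧ IsUnit ((U * A) k k) := by
  have hB : ∀ j ∈ s, B k j = 0 := fun j hj => by
    simpa [mul_apply, hA _ j hj, one_apply, (ne_of_mem_of_not_mem hj hk).symm]
      using congr_fun₂ hBA k j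
  set u := (insert k s)ᶜ
  have hspan : Ideal.span (insert (A k k) ((fun i => A i k) '' u)) = ⊤ := by
    have hcol : B k k * A k k + ∑ i ∈ u, B k i * A i k = 1 := by
      have := congr_fun₂ hBA k k
      rwa [mul_apply, one_apply_eq, ← sum_add_sum_compl (insert k s), sum_insert hk,
        sum_eq_zero (fun j hj => by rw [hB j hj, zero_mul]), add_zero] at this
    rw [Ideal.eq_top_iff_one, ← hcol]
    exact Ideal.add_mem _ (Ideal.mul_mem_left _ _ (Ideal.subset_span (Set.mem_insert _ _)))
      (Ideal.sum_mem _ fun i hi => Ideal.mul_mem_left _ _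
        (Ideal.subset_span (Set.mem_insert_of_mem _ ⟨i, hi, rfl⟩)))
  obtain ⟨t, ht⟩ := exists_isUnit_add_sum_mul u (A k k) (fun i => A i k) hspan
  have hku : k ∉ u := by simp [u]
  refine ⟨_, one_add_sum_single_row_mem_elementaryMatrices hku t, fun i j hj => ?_, ?_⟩
  · rw [one_add_sum_single_mul_apply, hA i j hj, add_eq_left]
    refine sum_eq_zero fun i' hi' => ?_
    have hi'j : i' ≠ j := by rintro rfl; exact mem_compl.1 hi' (mem_insert_of_mem hj)
    rw [hA i' j hj, one_apply_ne hi'j, mul_zero, ite_self]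
  · simpa [one_add_sum_single_mul_apply] using ht

theorem exists_mem_elementaryMatrices_eqOneOnCols_insert_of_pivot_eq_one {C : Matrix n n R}
    {s : Finset n} {k : n} (hk : k ∉ s) (hC : EqOneOnCols s C)
    (hCk : C k k = 1) :
    ∃ U ∈ elementaryMatrices n R, EqOneOnCols (insert k s) (U * C) := by
  refine ⟨1 + ∑ i ∈ univ.erase k, single i k (-C i k),
    one_add_sum_single_col_mem_elementaryMatrices (notMem_erase k univ) _, fun i j hj => ?_⟩
  rw [one_add_sum_single_mul_apply, sum_ite_eq]
  rcases mem_insert.1 hj with rfl | hj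
  · rw [hCk, mul_one]
    rcases eq_or_ne i j with rfl | hij
    · simp [hCk]
    · simp [hij]
  · rw [hC k j hj, one_apply_ne (ne_of_mem_of_not_mem hj hk).symm, mul_zero, ite_self,
      add_zero, hC i j hj]

theorem exists_mem_elementaryMatrices_eqOneOnCols_insert {C : Matrix n n R} {s : Finset n} {k : n}
    (hk : k ∉ s) (hC : EqOneOnCols s C) (hCk : IsUnit (C k k)) :
    ∃ U ∈ elementaryMatrices n R, EqOneOnCols (insert k s) (U * C) := by
  set d := Function.update (fun _ => (1 : R)) k ((hCk.unit⁻¹ : Rˣ) : R)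
  have hdC (i j : n) : (diagonal d * C) i j = d i * C i j := diagonal_mul d C i j
  have hdCs : EqOneOnCols s (diagonal d * C) := by
    intro i j hj
    rcases eq_or_ne i j with rfl | hij
    · simp [hdC, d, hC i i hj, ne_of_mem_of_not_mem hj hk]
    · simp [hdC, hC i j hj, hij]
  obtain ⟨V, hV, hVC⟩ := exists_mem_elementaryMatrices_eqOneOnCols_insert_of_pivot_eq_one
    hk hdCs (by simp [hdC, d])
  exact ⟨V * diagonal d, mul_mem hV (diagonal_update_mem_elementaryMatrices k _),
    by simpa only [mul_assoc] using hVC⟩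

theorem exists_mem_elementarySubgroup_eqOneOnCols [Finite (MaximalSpectrum R)]
    (A : (Matrix n n R)ˣ) (s : Finset n) :
    ∃ U ∈ elementarySubgroup n R,
      EqOneOnCols s ((U * A : (Matrix n n R)ˣ) : Matrix n n R) := by
  induction s using Finset.induction_on with
  | empty => exact ⟨1, one_mem _, fun _ _ h => absurd h (notMem_empty _)⟩
  | insert k s hk ih =>
    obtain ⟨U, hU, hUA⟩ := ih
    obtain ⟨V, hV, hVUA, hpivot⟩ :=
      exists_mem_elementaryMatrices_isUnit_pivot (U * A).inv_mul hk hUA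
    obtain ⟨W, hW, hWVUA⟩ := exists_mem_elementaryMatrices_eqOneOnCols_insert hk hVUA hpivot
    obtain ⟨w, hw, rfl⟩ := Submonoid.mem_map.1 hW
    obtain ⟨v, hv, rfl⟩ := Submonoid.mem_map.1 hV
    exact ⟨w * v * U, mul_mem (mul_mem hw hv) hU, by simpa [mul_assoc] using hWVUA⟩

theorem elementarySubgroup_eq_top [Finite (MaximalSpectrum R)] : elementarySubgroup n R = ⊤ := by
  refine eq_top_iff.2 fun A _ => ?_
  obtain ⟨U, hU, hUA⟩ := exists_mem_elementarySubgroup_eqOneOnCols A univ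
  have hUA1 : U * A = 1 := Units.ext (ext fun i j => hUA i j (mem_univ j))
  exact eq_inv_of_mul_eq_one_right hUA1 ▸ inv_mem hU

end Matrix

theorem stmt4_general (R : Type*) [CommRing R] [Fintype R] (m : ℕ) :
    Subgroup.closure { A : (Matrix (Fin m) (Fin m) R)ˣ |
      (∃ (j k : Fin m) (c : R), j ≠ k ∧
        (A : Matrix (Fin m) (Fin m) R) = 1 + Matrix.single j k c) ∨
      (∃ (l : Fin m) (v : Rˣ),
        (A : Matrix (Fin m) (Fin m) R) =
          Matrix.diagonal (Function.update (fun _ => (1 : R)) l (v : R))) } = ⊤ :=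
  Matrix.elementarySubgroup_eq_top

/-- For a finite commutative ring `R` and `m ≥ 2`, `GL_m(R)` is generated by elementary
matrices: transvections `I + c·E_{jk}` (`j ≠ k`) and dilations (identity with a diagonal
entry replaced by a unit). -/
theorem stmt4 (R : Type*) [CommRing R] [Fintype R] (m : ℕ) (hm : 2 ≤ m) :
    Subgroup.closure { A : (Matrix (Fin m) (Fin m) R)ˣ |
      (∃ (j k : Fin m) (c : R), j ≠ k ∧
        (A : Matrix (Fin m) (Fin m) R) = 1 + Matrix.single j k c) ∨
      (∃ (l : Fin m) (v : Rˣ),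
        (A : Matrix (Fin m) (Fin m) R) =
          Matrix.diagonal (Function.update (fun _ => (1 : R)) l (v : R))) } = ⊤ :=
  stmt4_general R m
end

section
/- Let ψ : M_m(R_{q,s}) → R_m be the inverse of the F_q-algebra isomorphism φ determined by a normal basis B = {α^{q^j}} of F_{q^m}/F_q with dual basis {u^{q^j}}. For c(x) = Σ_{i=0}^{s−1} c_i x^i ∈ R_{q,s} and j,k ∈ {1,…,m}, the image of the matrix c(x)·E_{jk} under ψ is the linearized polynomial Σ_{i=0}^{s−1} Σ_{r=0}^{m−1} c_i (α^{q^j} u^{q^{k+r}}) X^{q^{mi+r}}. -/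
/-! The sum `Σ_r (α^{q^j} u^{q^{k+r}}) x^{q^r}` is `α^{q^j} · Tr(x u^{q^k})`, since the trace of
`F_{q^m}/F_q` is the sum of the `m` Frobenius conjugates. On the normal basis this is
`α^{q^j} · δ_{tk}` at `x = α^{q^t}` by duality, so the map sends `α^{q^k}` to `c_i α^{q^j}` and
kills the other basis vectors. -/

theorem FiniteField.algebraMap_trace_eq_sum_fin_pow_s6 {K L : Type*} [Field K] [Field L] [Finite L]
    [Algebra K L] {m : ℕ} (hm : Module.finrank K L = m) (x : L) :
    algebraMap K L (Algebra.trace K L x) = ∑ r : Fin m, x ^ Nat.card K ^ (r : ℕ) := by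
  subst hm
  rw [algebraMap_trace_eq_sum_pow, Finset.sum_range]

theorem LinearMap.toMatrix_eq_single_of_apply_basis {R M ι : Type*} [CommSemiring R]
    [AddCommMonoid M] [Module R M] [Fintype ι] [DecidableEq ι] (b : Module.Basis ι R M)
    (f : M →ₗ[R] M) (j k : ι) (c : R) (hf : ∀ t, f (b t) = if t = k then c • b j else 0) :
    LinearMap.toMatrix b b f = Matrix.single j k c := by
  ext i t
  rw [LinearMap.toMatrix_apply, hf t]
  by_cases htk : t = k
  · subst htk
    simp [Matrix.single_apply, Finsupp.single_apply]
  · simp [htk, Ne.symm htk]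

theorem stmt6_general (q m s : ℕ)
    (Fq Fqm : Type*) [Field Fq] [Field Fqm] [Fintype Fq] [Fintype Fqm] [Algebra Fq Fqm]
    (hq : Fintype.card Fq = q)
    (α u : Fqm)
    (b : Module.Basis (Fin m) Fq Fqm) (hb : ∀ i : Fin m, b i = α ^ q ^ (i : ℕ))
    (hdual : ∀ i j : Fin m,
      Algebra.trace Fq Fqm (α ^ q ^ (i : ℕ) * u ^ q ^ (j : ℕ)) = if i = j then 1 else 0)
    (c : Fin s → Fq) (j k : Fin m) :
    ∀ (i : Fin s) (f : Fqm →ₗ[Fq] Fqm),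
      (∀ x : Fqm, f x = ∑ r : Fin m,
          algebraMap Fq Fqm (c i) * (α ^ q ^ (j : ℕ) * u ^ q ^ ((k : ℕ) + (r : ℕ)))
            * x ^ q ^ (r : ℕ)) →
      LinearMap.toMatrix b b f = Matrix.single j k (c i) := by
  intro i f hf
  have hfinrank : Module.finrank Fq Fqm = m := by simpa using Module.finrank_eq_card_basis b
  have hf_trace : ∀ x, f x =
      algebraMap Fq Fqm (c i * Algebra.trace Fq Fqm (x * u ^ q ^ (k : ℕ))) * α ^ q ^ (j : ℕ) := by
    intro x
    rw [hf, map_mul, FiniteField.algebraMap_trace_eq_sum_fin_pow_s6 hfinrank, Nat.card_eq_fintype_card,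
      hq, Finset.mul_sum, Finset.sum_mul]
    refine Finset.sum_congr rfl fun r _ => ?_
    rw [mul_pow, ← pow_mul, ← pow_add]
    ring
  refine LinearMap.toMatrix_eq_single_of_apply_basis b f j k (c i) fun t => ?_
  rw [hf_trace, hb t, hb j, hdual t k]
  split_ifs <;> simp [Algebra.smul_def]

/-- The image of `c(x)·E_{jk}` under `ψ = φ⁻¹` is the linearized polynomial
`Σ_i Σ_r c_i (α^{q^j} u^{q^{k+r}}) X^{q^{mi+r}}`.  Since `φ(g) = Σ_i [g_i]_B x^i` for the
decomposition `g = Σ_i g_i(X^{q^{mi}})`, this is equivalent to saying that for each `i`,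
the `F_q`-linear map `x ↦ Σ_r c_i (α^{q^j} u^{q^{k+r}}) x^{q^r}` on `F_{q^m}` has matrix
`c_i · E_{jk}` with respect to the normal basis `B = {α^{q^r}}` (with dual basis `{u^{q^r}}`). -/
theorem stmt6 (q m s : ℕ) (hm : 0 < m) (hs : 0 < s)
    (Fq Fqm : Type*) [Field Fq] [Field Fqm] [Fintype Fq] [Fintype Fqm] [Algebra Fq Fqm]
    (hq : Fintype.card Fq = q) (hqm : Fintype.card Fqm = q ^ m)
    (α u : Fqm)
    (b : Module.Basis (Fin m) Fq Fqm) (hb : ∀ i : Fin m, b i = α ^ q ^ (i : ℕ))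
    (hdual : ∀ i j : Fin m,
      Algebra.trace Fq Fqm (α ^ q ^ (i : ℕ) * u ^ q ^ (j : ℕ)) = if i = j then 1 else 0)
    (c : Fin s → Fq) (j k : Fin m) :
    ∀ (i : Fin s) (f : Fqm →ₗ[Fq] Fqm),
      (∀ x : Fqm, f x = ∑ r : Fin m,
          algebraMap Fq Fqm (c i) * (α ^ q ^ (j : ℕ) * u ^ q ^ ((k : ℕ) + (r : ℕ)))
            * x ^ q ^ (r : ℕ)) →
      LinearMap.toMatrix b b f = Matrix.single j k (c i) :=
  stmt6_general q m s Fq Fqm hq α u b hb hdual c j k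
end

section
/- With x^s − 1 = Π_{j=1}^t f_j^{s_j} (distinct irreducibles, d_j = deg f_j), the order of GL_m(F_q[x]/⟨x^s−1⟩) equals q^{m²s} · Π_{j=1}^t Π_{i=1}^m (1 − q^{−i·d_j}). -/
/-!
By the Chinese remainder theorem, `F_q[x]/⟨x^s - 1⟩ ≃ ∏ⱼ F_q[x]/⟨fⱼ^sⱼ⟩`, and `GL_m` of a finite
product is the product of the `GL_m`s. Reduction `F_q[x]/⟨f^e⟩ → F_q[x]/⟨f⟩ = F_{q^d}` is
surjective with nilpotent kernel, so on `m × m` matrices it is a local homomorphism (a matrix is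
invertible iff its determinant is) and `GL_m(F_q[x]/⟨f^e⟩) → GL_m(F_{q^d})` is onto, with kernel
`1 + M_m(⟨f⟩/⟨f^e⟩)` of size `q^{d(e-1)m²}`. Finally
`|GL_m(F_Q)| = ∏_{i<m} (Q^m - Q^i) = Q^{m²} ∏_{i=1}^m (1 - Q^{-i})`, and `∑ⱼ sⱼ dⱼ = s`.
-/

open Function Polynomial

theorem RingHom.isLocalHom_of_surjective_of_isNilpotent {A B : Type*} [CommRing A] [Ring B]
    (φ : A →+* B) (hφ : Surjective φ) (hnil : ∀ a, φ a = 0 → IsNilpotent a) :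
    IsLocalHom φ where
  map_nonunit a := by
    rintro ⟨u, hu⟩
    obtain ⟨b, hb⟩ := hφ ↑u⁻¹
    have hab : IsNilpotent (a * b - 1) := hnil _ (by simp [hb, ← hu])
    exact isUnit_of_mul_isUnit_left (by simpa using hab.isUnit_add_one)

theorem Ideal.Quotient.isLocalHom_factor_of_pow_le {R : Type*} [CommRing R] {I J : Ideal R}
    (hIJ : I ≤ J) {e : ℕ} (hJ : J ^ e ≤ I) : IsLocalHom (Ideal.Quotient.factor hIJ) := by
  refine (Ideal.Quotient.factor hIJ).isLocalHom_of_surjective_of_isNilpotent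
    (Ideal.Quotient.factor_surjective hIJ) fun a ha => ?_
  obtain ⟨p, rfl⟩ := Ideal.Quotient.mk_surjective a
  rw [Ideal.Quotient.factor_mk, Ideal.Quotient.eq_zero_iff_mem] at ha
  refine ⟨e, ?_⟩
  rw [← map_pow, Ideal.Quotient.eq_zero_iff_mem]
  exact hJ (Ideal.pow_mem_pow ha e)

instance RingHom.isLocalHom_mapMatrix {n A B : Type*} [Fintype n] [DecidableEq n]
    [CommRing A] [CommRing B] (φ : A →+* B) [IsLocalHom φ] :
    IsLocalHom (φ.mapMatrix : Matrix n n A →+* Matrix n n B) where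
  map_nonunit M hM := by
    rw [Matrix.isUnit_iff_isUnit_det] at hM ⊢
    rw [← RingHom.map_det] at hM
    exact isUnit_of_map_unit φ _ hM

theorem RingHom.mapMatrix_surjective {n A B : Type*} [Fintype n] [DecidableEq n]
    [Ring A] [Ring B] (φ : A →+* B) (hφ : Surjective φ) :
    Surjective (φ.mapMatrix : Matrix n n A →+* Matrix n n B) :=
  fun N => ⟨N.map fun b => (hφ b).choose, by ext; simp [(hφ _).choose_spec]⟩

theorem card_units_mul_card_eq_of_surjective {A B : Type*} [Ring A] [Ring B] [Finite A]
    (φ : A →+* B) (hφ : Surjective φ) [IsLocalHom φ] :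
    Nat.card Aˣ * Nat.card B = Nat.card A * Nat.card Bˣ := by
  set ψ : Aˣ →* Bˣ := Units.map φ
  have hψ : Surjective ψ :=
    IsLocalRing.surjective_units_map_of_local_ringHom φ hφ inferInstance
  have hker : ψ.ker ≃ φ.toAddMonoidHom.ker :=
    { toFun u := ⟨(u : Aˣ) - 1, by
        have : φ (u : Aˣ) = 1 := congrArg Units.val (MonoidHom.mem_ker.mp u.2)
        simp [this]⟩
      invFun a :=
        have ha : φ a = 0 := a.2
        ⟨(isUnit_of_map_unit φ (1 + (a : A)) (by simp [ha])).unit,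
          by rw [MonoidHom.mem_ker]; ext; simp [ψ, ha]⟩
      left_inv u := by ext; simp
      right_inv a := by ext; simp }
  have hA := AddSubgroup.card_eq_card_quotient_mul_card_addSubgroup φ.toAddMonoidHom.ker
  have hAu := Subgroup.card_eq_card_quotient_mul_card_subgroup ψ.ker
  rw [Nat.card_congr (QuotientAddGroup.quotientKerEquivOfSurjective _ hφ).toEquiv] at hA
  rw [Nat.card_congr (QuotientGroup.quotientKerEquivOfSurjective _ hψ).toEquiv,
    Nat.card_congr hker] at hAu
  rw [hA, hAu]
  ring

theorem Nat.card_matrix (m n α : Type*) [Fintype m] [Fintype n] :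
    Nat.card (Matrix m n α) = Nat.card α ^ (Fintype.card m * Fintype.card n) := by
  rw [Matrix, Nat.card_fun, Nat.card_fun, Nat.card_eq_fintype_card (α := m),
    Nat.card_eq_fintype_card (α := n), ← pow_mul, mul_comm]

theorem card_units_matrix_eq_of_surjective {A B : Type*} [CommRing A] [CommRing B] [Finite A]
    (φ : A →+* B) (hφ : Surjective φ) [IsLocalHom φ] (m : ℕ) :
    (Nat.card (Matrix (Fin m) (Fin m) A)ˣ : ℚ)
      = ((Nat.card A : ℚ) / Nat.card B) ^ (m ^ 2) * Nat.card (Matrix (Fin m) (Fin m) B)ˣ := by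
  have := Finite.of_surjective φ hφ
  have hB : (Nat.card B : ℚ) ^ (m ^ 2) ≠ 0 :=
    pow_ne_zero _ (Nat.cast_ne_zero.2 Nat.card_pos.ne')
  have hcount := card_units_mul_card_eq_of_surjective _ (φ.mapMatrix_surjective (n := Fin m) hφ)
  rw [Nat.card_matrix, Nat.card_matrix, Fintype.card_fin, ← sq] at hcount
  rw [div_pow, div_mul_eq_mul_div, eq_div_iff hB]
  exact_mod_cast hcount

theorem card_GL_field_eq {K : Type*} [Field K] [Fintype K] (m : ℕ) :
    (Nat.card (GL (Fin m) K) : ℚ)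
      = (Fintype.card K : ℚ) ^ (m ^ 2) *
        ∏ i ∈ Finset.Icc 1 m, (1 - (Fintype.card K : ℚ) ^ (-(i : ℤ))) := by
  set Q := Fintype.card K
  have hQ : (Q : ℚ) ≠ 0 := Nat.cast_ne_zero.2 Fintype.card_ne_zero
  have hfactor : ∀ i ∈ Finset.range m, ((Q ^ m - Q ^ (m - 1 - i) : ℕ) : ℚ)
      = (Q : ℚ) ^ m * (1 - (Q : ℚ) ^ (-((1 + i : ℕ) : ℤ))) := by
    intro i hi
    have hpow : (Q : ℚ) ^ m = Q ^ (m - 1 - i) * Q ^ (1 + i) := by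
      rw [← pow_add]; congr 1; rw [Finset.mem_range] at hi; omega
    rw [Nat.cast_sub (Nat.pow_le_pow_right Fintype.card_pos (by omega)), zpow_neg, zpow_natCast]
    push_cast
    rw [hpow]
    field_simp
    ring
  rw [Matrix.card_GL_field, Nat.cast_prod, Fin.prod_univ_eq_prod_range
    (fun i => ((Q ^ m - Q ^ i : ℕ) : ℚ)), ← Finset.prod_range_reflect,
    Finset.prod_congr rfl hfactor, Finset.prod_mul_distrib, Finset.prod_const, Finset.card_range,
    ← pow_mul, sq, ← Finset.Ico_add_one_right_eq_Icc, Finset.prod_Ico_eq_prod_range]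
  simp [add_comm]

theorem card_quotient_span_singleton {K : Type*} [Field K] [Fintype K] {g : K[X]} (hg : g ≠ 0) :
    Nat.card (K[X] ⧸ Ideal.span {g}) = Fintype.card K ^ g.natDegree := by
  change Nat.card (AdjoinRoot g) = _
  rw [Nat.card_congr (AdjoinRoot.powerBasisAux hg).equivFun.toEquiv, Nat.card_fun,
    Nat.card_eq_fintype_card, Nat.card_eq_fintype_card, Fintype.card_fin]

theorem finite_quotient_span_singleton {K : Type*} [Field K] [Finite K] {g : K[X]} (hg : g ≠ 0) :
    Finite (K[X] ⧸ Ideal.span {g}) :=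
  Finite.of_equiv _ (AdjoinRoot.powerBasisAux hg).equivFun.toEquiv.symm

theorem card_units_matrix_quotient_span_pow {K : Type*} [Field K] [Fintype K] {g : K[X]}
    (hg : Irreducible g) {e : ℕ} (he : 0 < e) (m : ℕ) :
    (Nat.card (Matrix (Fin m) (Fin m) (K[X] ⧸ Ideal.span {g ^ e}))ˣ : ℚ)
      = (Fintype.card K : ℚ) ^ (m ^ 2 * (e * g.natDegree)) * ∏ i ∈ Finset.Icc 1 m,
          (1 - (Fintype.card K : ℚ) ^ (-((i * g.natDegree : ℕ) : ℤ))) := by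
  have hle : Ideal.span {g ^ e} ≤ Ideal.span {g} :=
    Ideal.span_singleton_le_span_singleton.2 (dvd_pow_self g he.ne')
  have := Ideal.Quotient.isLocalHom_factor_of_pow_le hle (Ideal.span_singleton_pow g e).le
  have := finite_quotient_span_singleton (pow_ne_zero e hg.ne_zero)
  have := finite_quotient_span_singleton hg.ne_zero
  have := PrincipalIdealRing.isMaximal_of_irreducible hg
  let : Field (K[X] ⧸ Ideal.span {g}) := Ideal.Quotient.field _
  let : Fintype (K[X] ⧸ Ideal.span {g}) := Fintype.ofFinite _
  have hGL : (Nat.card (Matrix (Fin m) (Fin m) (K[X] ⧸ Ideal.span {g}))ˣ : ℚ) = _ :=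
    card_GL_field_eq m
  rw [card_units_matrix_eq_of_surjective _ (Ideal.Quotient.factor_surjective hle), hGL,
    ← Nat.card_eq_fintype_card, card_quotient_span_singleton hg.ne_zero,
    card_quotient_span_singleton (pow_ne_zero e hg.ne_zero), natDegree_pow, ← mul_assoc,
    ← mul_pow, div_mul_cancel₀ _ (Nat.cast_ne_zero.2 (pow_ne_zero _ Fintype.card_ne_zero))]
  push_cast
  congr 1
  · ring
  · refine Finset.prod_congr rfl fun i _ => ?_
    rw [← zpow_natCast, ← zpow_mul]
    ring_nf

theorem card_units_matrix_quotient_iInf {R ι n : Type*} [CommRing R] [Fintype ι] [Fintype n]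
    [DecidableEq n] (I : ι → Ideal R) (hI : Pairwise (IsCoprime on I)) :
    Nat.card (Matrix n n (R ⧸ ⨅ i, I i))ˣ = ∏ i, Nat.card (Matrix n n (R ⧸ I i))ˣ := by
  let crt := (Ideal.quotientInfRingEquivPiQuotient I hI).mapMatrix.trans
    (Matrix.piRingEquiv (n := n) (β := fun i => R ⧸ I i))
  rw [Nat.card_congr ((Units.mapEquiv crt.toMulEquiv).trans MulEquiv.piUnits).toEquiv,
    Nat.card_pi]

theorem Polynomial.pairwise_isCoprime_pow_of_irreducible_of_monic {K ι : Type*} [Field K]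
    {f : ι → K[X]} (hirr : ∀ i, Irreducible (f i)) (hmonic : ∀ i, (f i).Monic)
    (hinj : Injective f) (k : ι → ℕ) : Pairwise (IsCoprime on fun i => f i ^ k i) := by
  intro i j hij
  refine IsCoprime.pow ((hirr i).coprime_iff_not_dvd.2 fun hdvd => hij (hinj ?_))
  exact eq_of_monic_of_associated (hmonic i) (hmonic j) ((hirr i).associated_of_dvd (hirr j) hdvd)

theorem stmt12_general (q s m t : ℕ)
    (Fq : Type*) [Field Fq] [Fintype Fq] (hq : Fintype.card Fq = q)
    (f : Fin t → Polynomial Fq) (sj : Fin t → ℕ) (d : Fin t → ℕ)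
    (hirr : ∀ j, Irreducible (f j)) (hmonic : ∀ j, (f j).Monic)
    (hdist : Function.Injective f) (hsj : ∀ j, 0 < sj j)
    (hd : ∀ j, d j = (f j).natDegree)
    (hfact : Polynomial.X ^ s - 1 = ∏ j : Fin t, f j ^ sj j) :
    (Nat.card (Matrix (Fin m) (Fin m)
        (Polynomial Fq ⧸ (Ideal.span {Polynomial.X ^ s - 1} : Ideal (Polynomial Fq))))ˣ : ℚ)
      = (q : ℚ) ^ (m ^ 2 * s) *
        ∏ j : Fin t, ∏ i ∈ Finset.Icc 1 m, (1 - (q : ℚ) ^ (-((i * d j : ℕ) : ℤ))) := by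
  subst hq
  obtain rfl : d = fun j => (f j).natDegree := funext hd
  have hcop := pairwise_isCoprime_pow_of_irreducible_of_monic hirr hmonic hdist sj
  have hdeg : s = ∑ j, sj j * (f j).natDegree := by
    rw [← natDegree_X_pow_sub_C (n := s) (r := (1 : Fq)), C_1, hfact,
      natDegree_prod _ _ fun j _ => pow_ne_zero _ (hirr j).ne_zero]
    simp only [natDegree_pow]
  rw [hfact, ← Ideal.iInf_span_singleton fun i j hij => hcop hij,
    card_units_matrix_quotient_iInf (n := Fin m) _
      fun i j hij => (Ideal.isCoprime_span_singleton_iff _ _).2 (hcop hij),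
    Nat.cast_prod,
    Finset.prod_congr rfl fun j _ => card_units_matrix_quotient_span_pow (hirr j) (hsj j) m,
    Finset.prod_mul_distrib, Finset.prod_pow_eq_pow_sum, hdeg, Finset.mul_sum]

/-- `|GL_m(F_q[x]/⟨x^s-1⟩)| = q^{m²s} · Π_j Π_{i=1}^m (1 - q^{-i d_j})`. -/
theorem stmt12 (q s m t : ℕ) (hs : 0 < s) (hm : 0 < m)
    (Fq : Type*) [Field Fq] [Fintype Fq] (hq : Fintype.card Fq = q)
    (f : Fin t → Polynomial Fq) (sj : Fin t → ℕ) (d : Fin t → ℕ)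
    (hirr : ∀ j, Irreducible (f j)) (hmonic : ∀ j, (f j).Monic)
    (hdist : Function.Injective f) (hsj : ∀ j, 0 < sj j)
    (hd : ∀ j, d j = (f j).natDegree)
    (hfact : Polynomial.X ^ s - 1 = ∏ j : Fin t, f j ^ sj j) :
    (Nat.card (Matrix (Fin m) (Fin m)
        (Polynomial Fq ⧸ (Ideal.span {Polynomial.X ^ s - 1} : Ideal (Polynomial Fq))))ˣ : ℚ)
      = (q : ℚ) ^ (m ^ 2 * s) *
        ∏ j : Fin t, ∏ i ∈ Finset.Icc 1 m, (1 - (q : ℚ) ^ (-((i * d j : ℕ) : ℤ))) :=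
  stmt12_general q s m t Fq hq f sj d hirr hmonic hdist hsj hd hfact
end
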